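/- The linear map U: ℤ⁴ → ℤ⁴ given by the matrix with rows (−1, 0, −2, 1), (0, −1, −3, 0), (1, 0, 2, 0), (0, 1, 2, 0) is unimodular (its determinant has absolute value 1), and U maps the set {h₁, …, h₇} bijectively onto the set H = {h₁, h₄−h₂, h₇−h₂, h₄−h₃, h₆−h₃, h₄−h₅, h₆−h₅}; explicitly, U(h₁)=h₆−h₅, U(h₂)=h₄−h₂, U(h₃)=h₄−h₅, U(h₄)=h₁, U(h₅)=h₆−h₃, U(h₆)=h₄−h₃, U(h₇)=h₇−h₂. -/

import Mathlib

/-- The seven lattice points `h₁, …, h₇` (0-indexed as `h 0, …, h 6`). -/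
def h : Fin 7 → (Fin 4 → ℤ) :=
  ![![1,0,0,0], ![0,1,0,0], ![0,0,1,0], ![0,0,0,1],
    ![2,3,-2,-1], ![1,3,-1,-1], ![1,2,-1,0]]

/-- The matrix `U` (acting on column vectors). -/
def U : Matrix (Fin 4) (Fin 4) ℤ :=
  !![-1, 0, -2, 1;
      0, -1, -3, 0;
      1, 0, 2, 0;
      0, 1, 2, 0]

/-- The seven-element set `H`. -/
def H : Set (Fin 4 → ℤ) :=
  {h 0, h 3 - h 1, h 6 - h 1, h 3 - h 2, h 5 - h 2, h 3 - h 4, h 5 - h 4}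

/-
`U` is injective because its determinant is a unit of `ℤ`, so the bijection reduces to
computing the seven images `U hᵢ`, which are the elements of `H` up to order.
-/

lemma U_det : U.det = 1 := by
  simp [U, Matrix.det_succ_row_zero, Fin.sum_univ_succ, Fin.succAbove]

lemma U_mulVec_injective : Function.Injective U.mulVec :=
  Matrix.mulVec_injective_of_isUnit <| (Matrix.isUnit_iff_isUnit_det U).mpr (by simp [U_det])

lemma U_mulVec_h_zero : U.mulVec (h 0) = h 5 - h 4 := by decide
lemma U_mulVec_h_one : U.mulVec (h 1) = h 3 - h 1 := by decide
lemma U_mulVec_h_two : U.mulVec (h 2) = h 3 - h 4 := by decide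
lemma U_mulVec_h_three : U.mulVec (h 3) = h 0 := by decide
lemma U_mulVec_h_four : U.mulVec (h 4) = h 5 - h 2 := by decide
lemma U_mulVec_h_five : U.mulVec (h 5) = h 3 - h 2 := by decide
lemma U_mulVec_h_six : U.mulVec (h 6) = h 6 - h 1 := by decide

lemma U_mulVec_image_h : U.mulVec '' {h 0, h 1, h 2, h 3, h 4, h 5, h 6} = H := by
  simp only [Set.image_insert_eq, Set.image_singleton, U_mulVec_h_zero, U_mulVec_h_one,
    U_mulVec_h_two, U_mulVec_h_three, U_mulVec_h_four, U_mulVec_h_five, U_mulVec_h_six, H]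
  ext v
  simp only [Set.mem_insert_iff, Set.mem_singleton_iff]
  tauto

/-- `U` is unimodular and maps `{h₁, …, h₇}` bijectively onto `H`, with
`U(h₁)=h₆−h₅`, `U(h₂)=h₄−h₂`, `U(h₃)=h₄−h₅`, `U(h₄)=h₁`, `U(h₅)=h₆−h₃`,
`U(h₆)=h₄−h₃`, `U(h₇)=h₇−h₂`. -/
theorem stmt_7 :
    |U.det| = 1 ∧
    Set.BijOn (fun v => U.mulVec v) ({h 0, h 1, h 2, h 3, h 4, h 5, h 6} : Set (Fin 4 → ℤ)) H ∧
    U.mulVec (h 0) = h 5 - h 4 ∧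
    U.mulVec (h 1) = h 3 - h 1 ∧
    U.mulVec (h 2) = h 3 - h 4 ∧
    U.mulVec (h 3) = h 0 ∧
    U.mulVec (h 4) = h 5 - h 2 ∧
    U.mulVec (h 5) = h 3 - h 2 ∧
    U.mulVec (h 6) = h 6 - h 1 := by
  refine ⟨by rw [U_det, abs_one], ?_, U_mulVec_h_zero, U_mulVec_h_one, U_mulVec_h_two,
    U_mulVec_h_three, U_mulVec_h_four, U_mulVec_h_five, U_mulVec_h_six⟩
  rw [← U_mulVec_image_h]
  exact U_mulVec_injective.injOn.bijOn_image
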